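/- arXiv:2404.01449 — 2 statements merged into one kernel-verified Lean document; each statement's English description precedes it below -/
import Mathlib

section
/- Let K be a number field, let 𝔱 be a nonzero prime ideal of O_K, and let 𝔪 be a nonzero ideal of O_K. Then Γ₀(𝔱, 𝔪) is generated by SΓ₀(𝔱𝔪) together with the matrices (1, b; 0, 1) for b∈𝔱⁻¹ and (ε, 0; 0, 1) for ε∈O_K^×. Likewise, Γ₀⁺(𝔱, 𝔪) is generated by SΓ₀(𝔱𝔪) together with (1, b; 0, 1) for b∈𝔱⁻¹ and (ε, 0; 0, 1) for ε a totally positive unit of O_K. -/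
open NumberField FractionalIdeal
open scoped nonZeroDivisors MatrixGroups

set_option linter.unusedSectionVars false
set_option maxHeartbeats 1000000

section Gamma0Gen

variable {K : Type*} [Field K] [NumberField K]

private lemma fadd {I : FractionalIdeal (𝓞 K)⁰ K} {x y : K} (hx : x ∈ I) (hy : y ∈ I) :
    x + y ∈ I :=
  FractionalIdeal.mem_coe.mp
    (Submodule.add_mem _ (FractionalIdeal.mem_coe.mpr hx) (FractionalIdeal.mem_coe.mpr hy))

private lemma fneg {I : FractionalIdeal (𝓞 K)⁰ K} {x : K} (hx : x ∈ I) : -x ∈ I :=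
  FractionalIdeal.mem_coe.mp (Submodule.neg_mem _ (FractionalIdeal.mem_coe.mpr hx))

private lemma fzero {I : FractionalIdeal (𝓞 K)⁰ K} : (0 : K) ∈ I := FractionalIdeal.zero_mem I

private lemma fsmul {I : FractionalIdeal (𝓞 K)⁰ K} (x : 𝓞 K) {b : K} (hb : b ∈ I) :
    algebraMap (𝓞 K) K x * b ∈ I := by
  rw [← Algebra.smul_def]
  exact FractionalIdeal.mem_coe.mp (Submodule.smul_mem _ x (FractionalIdeal.mem_coe.mpr hb))

private lemma fone (x : 𝓞 K) : algebraMap (𝓞 K) K x ∈ (1 : FractionalIdeal (𝓞 K)⁰ K) :=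
  (FractionalIdeal.mem_one_iff _).mpr ⟨x, rfl⟩

private lemma fmem (I : Ideal (𝓞 K)) {x : 𝓞 K} (hx : x ∈ I) :
    algebraMap (𝓞 K) K x ∈ (I : FractionalIdeal (𝓞 K)⁰ K) :=
  (FractionalIdeal.mem_coeIdeal _).mpr ⟨x, hx, rfl⟩

private lemma tinv_mul (t : Ideal (𝓞 K)) (ht : t ≠ 0) :
    ((t : FractionalIdeal (𝓞 K)⁰ K))⁻¹ * (t : FractionalIdeal (𝓞 K)⁰ K) = 1 := by
  rw [mul_comm]
  exact mul_inv_cancel₀ (FractionalIdeal.coeIdeal_ne_zero.mpr ht)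

private lemma one_le_tinv (t : Ideal (𝓞 K)) (ht : t ≠ 0) :
    (1 : FractionalIdeal (𝓞 K)⁰ K) ≤ ((t : FractionalIdeal (𝓞 K)⁰ K))⁻¹ := by
  calc (1 : FractionalIdeal (𝓞 K)⁰ K)
      = (t : FractionalIdeal (𝓞 K)⁰ K) * (t : FractionalIdeal (𝓞 K)⁰ K)⁻¹ :=
        (mul_inv_cancel₀ (FractionalIdeal.coeIdeal_ne_zero.mpr ht)).symm
    _ ≤ 1 * (t : FractionalIdeal (𝓞 K)⁰ K)⁻¹ :=
        mul_left_mono FractionalIdeal.coeIdeal_le_one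
    _ = _ := one_mul _

private lemma tinv_mul_tm (t m : Ideal (𝓞 K)) (ht : t ≠ 0) :
    ((t : FractionalIdeal (𝓞 K)⁰ K))⁻¹ * ((t * m : Ideal (𝓞 K)) : FractionalIdeal (𝓞 K)⁰ K) =
      (m : FractionalIdeal (𝓞 K)⁰ K) := by
  rw [FractionalIdeal.coeIdeal_mul, ← mul_assoc, tinv_mul t ht, one_mul]

private lemma det_expr (γ : GL (Fin 2) K) :
    γ.1 0 0 * γ.1 1 1 - γ.1 0 1 * γ.1 1 0 = (γ.1).det := (Matrix.det_fin_two _).symm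

/-- The ambient set `Γ₀(t,m)` with determinant unit constrained to `U`. -/
def GammaSet (t m : Ideal (𝓞 K)) (U : Subgroup (𝓞 K)ˣ) : Set (GL (Fin 2) K) :=
  {γ : GL (Fin 2) K |
    (∃ a : 𝓞 K, algebraMap (𝓞 K) K a = γ.1 0 0) ∧
    γ.1 0 1 ∈ ((t : FractionalIdeal (𝓞 K)⁰ K))⁻¹ ∧
    γ.1 1 0 ∈ ((t * m : Ideal (𝓞 K)) : FractionalIdeal (𝓞 K)⁰ K) ∧
    (∃ d : 𝓞 K, algebraMap (𝓞 K) K d = γ.1 1 1) ∧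
    (∃ u ∈ U, algebraMap (𝓞 K) K (u : (𝓞 K)ˣ) = γ.1 0 0 * γ.1 1 1 - γ.1 0 1 * γ.1 1 0)}

def SOne (t m : Ideal (𝓞 K)) : Set (GL (Fin 2) K) :=
  {δ : GL (Fin 2) K |
    (∃ a : 𝓞 K, algebraMap (𝓞 K) K a = δ.1 0 0) ∧
    (∃ b : 𝓞 K, algebraMap (𝓞 K) K b = δ.1 0 1) ∧
    δ.1 1 0 ∈ ((t * m : Ideal (𝓞 K)) : FractionalIdeal (𝓞 K)⁰ K) ∧
    (∃ d : 𝓞 K, algebraMap (𝓞 K) K d = δ.1 1 1) ∧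
    δ.1 0 0 * δ.1 1 1 - δ.1 0 1 * δ.1 1 0 = 1}

def STwo (t : Ideal (𝓞 K)) : Set (GL (Fin 2) K) :=
  {δ : GL (Fin 2) K | δ.1 0 0 = 1 ∧ δ.1 1 1 = 1 ∧ δ.1 1 0 = 0 ∧
    δ.1 0 1 ∈ ((t : FractionalIdeal (𝓞 K)⁰ K))⁻¹}

def SThree (U : Subgroup (𝓞 K)ˣ) : Set (GL (Fin 2) K) :=
  {δ : GL (Fin 2) K | δ.1 0 1 = 0 ∧ δ.1 1 0 = 0 ∧ δ.1 1 1 = 1 ∧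
    ∃ u ∈ U, algebraMap (𝓞 K) K (u : (𝓞 K)ˣ) = δ.1 0 0}

/-- `Γ₀(t,m)` as a subgroup. -/
def GammaGrp (t m : Ideal (𝓞 K)) (ht : t ≠ 0) (U : Subgroup (𝓞 K)ˣ) :
    Subgroup (GL (Fin 2) K) where
  carrier := GammaSet t m U
  one_mem' := by
    refine ⟨⟨1, ?_⟩, ?_, ?_, ⟨1, ?_⟩, ⟨1, one_mem U, ?_⟩⟩ <;>
      simp [Units.val_one, Matrix.one_apply] <;> exact fzero
  mul_mem' := by
    rintro γ δ ⟨⟨A1, hA1⟩, hb1, hc1, ⟨D1, hD1⟩, u1, hu1U, hu1⟩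
      ⟨⟨A2, hA2⟩, hb2, hc2, ⟨D2, hD2⟩, u2, hu2U, hu2⟩
    have e00 : (γ * δ).1 0 0 = γ.1 0 0 * δ.1 0 0 + γ.1 0 1 * δ.1 1 0 := by
      simp [Units.val_mul, Matrix.mul_apply, Fin.sum_univ_two]
    have e01 : (γ * δ).1 0 1 = γ.1 0 0 * δ.1 0 1 + γ.1 0 1 * δ.1 1 1 := by
      simp [Units.val_mul, Matrix.mul_apply, Fin.sum_univ_two]
    have e10 : (γ * δ).1 1 0 = γ.1 1 0 * δ.1 0 0 + γ.1 1 1 * δ.1 1 0 := by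
      simp [Units.val_mul, Matrix.mul_apply, Fin.sum_univ_two]
    have e11 : (γ * δ).1 1 1 = γ.1 1 0 * δ.1 0 1 + γ.1 1 1 * δ.1 1 1 := by
      simp [Units.val_mul, Matrix.mul_apply, Fin.sum_univ_two]
    have hbc : γ.1 0 1 * δ.1 1 0 ∈ ((m : Ideal (𝓞 K)) : FractionalIdeal (𝓞 K)⁰ K) := by
      have := FractionalIdeal.mul_mem_mul hb1 hc2
      rwa [tinv_mul_tm t m ht] at this
    obtain ⟨E, _, hE⟩ := (FractionalIdeal.mem_coeIdeal _).mp hbc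
    have hcb : γ.1 1 0 * δ.1 0 1 ∈ ((m : Ideal (𝓞 K)) : FractionalIdeal (𝓞 K)⁰ K) := by
      have := FractionalIdeal.mul_mem_mul hc1 hb2
      rwa [mul_comm, tinv_mul_tm t m ht] at this
    obtain ⟨E', _, hE'⟩ := (FractionalIdeal.mem_coeIdeal _).mp hcb
    refine ⟨⟨A1 * A2 + E, ?_⟩, ?_, ?_, ⟨E' + D1 * D2, ?_⟩, ⟨u1 * u2, mul_mem hu1U hu2U, ?_⟩⟩
    · rw [_root_.map_add, _root_.map_mul, hA1, hA2, hE, e00]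
    · rw [e01]
      refine fadd ?_ ?_
      · rw [← hA1]; exact fsmul A1 hb2
      · rw [mul_comm (γ.1 0 1), ← hD2]; exact fsmul D2 hb1
    · rw [e10]
      refine fadd ?_ ?_
      · rw [mul_comm (γ.1 1 0), ← hA2]; exact fsmul A2 hc1
      · rw [← hD1]; exact fsmul D1 hc2
    · rw [_root_.map_add, _root_.map_mul, hD1, hD2, hE', e11]
    · rw [det_expr] at hu1 hu2 ⊢
      rw [show ((γ * δ) : GL (Fin 2) K).1 = γ.1 * δ.1 from rfl, Matrix.det_mul, ← hu1, ← hu2,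
        Units.val_mul, _root_.map_mul]
  inv_mem' := by
    rintro γ ⟨⟨A, hA⟩, hb, hc, ⟨D, hD⟩, u, huU, hu⟩
    obtain ⟨C, hCtm, hC⟩ := (FractionalIdeal.mem_coeIdeal _).mp hc
    have hdet : (γ.1).det = algebraMap (𝓞 K) K (u : (𝓞 K)ˣ) := by
      rw [← det_expr, ← hu]
    have he : algebraMap (𝓞 K) K ((u⁻¹ : (𝓞 K)ˣ) : 𝓞 K) * (γ.1).det = 1 := by
      rw [hdet, ← _root_.map_mul, ← Units.val_mul, inv_mul_cancel, Units.val_one, _root_.map_one]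
    have hdne : (γ.1).det ≠ 0 := right_ne_zero_of_mul_eq_one he
    have hE : ∀ i j, (γ⁻¹).1 i j =
        algebraMap (𝓞 K) K ((u⁻¹ : (𝓞 K)ˣ) : 𝓞 K) * (γ.1).adjugate i j := by
      intro i j
      rw [Matrix.coe_units_inv, Matrix.inv_def, Matrix.smul_apply, Ring.inverse_eq_inv,
        inv_eq_of_mul_eq_one_left he, smul_eq_mul]
    have a00 : (γ.1).adjugate 0 0 = γ.1 1 1 := by rw [Matrix.adjugate_fin_two]; simp
    have a01 : (γ.1).adjugate 0 1 = -γ.1 0 1 := by rw [Matrix.adjugate_fin_two]; simp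
    have a10 : (γ.1).adjugate 1 0 = -γ.1 1 0 := by rw [Matrix.adjugate_fin_two]; simp
    have a11 : (γ.1).adjugate 1 1 = γ.1 0 0 := by rw [Matrix.adjugate_fin_two]; simp
    refine ⟨⟨(u⁻¹ : (𝓞 K)ˣ) * D, ?_⟩, ?_, ?_, ⟨(u⁻¹ : (𝓞 K)ˣ) * A, ?_⟩,
      ⟨u⁻¹, inv_mem huU, ?_⟩⟩
    · rw [_root_.map_mul, hD, hE 0 0, a00]
    · rw [hE 0 1, a01, mul_neg]
      exact fneg (fsmul _ hb)
    · rw [hE 1 0, a10, mul_neg]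
      exact fneg (fsmul _ hc)
    · rw [_root_.map_mul, hA, hE 1 1, a11]
    · rw [det_expr]
      have h1 : ((γ⁻¹).1).det * (γ.1).det = 1 := by
        rw [← Matrix.det_mul, ← Units.val_mul, inv_mul_cancel, Units.val_one, Matrix.det_one]
      exact mul_right_cancel₀ hdne (he.trans h1.symm)

end Gamma0Gen

section Gamma0Gen2

variable {K : Type*} [Field K] [NumberField K]

/-- upper unipotent -/
def upl (β : K) : GL (Fin 2) K :=
  ⟨!![1, β; 0, 1], !![1, -β; 0, 1],
    by ext i j; fin_cases i <;> fin_cases j <;> simp [Matrix.mul_apply, Fin.sum_univ_two],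
    by ext i j; fin_cases i <;> fin_cases j <;> simp [Matrix.mul_apply, Fin.sum_univ_two]⟩

def lowl (x : K) : GL (Fin 2) K :=
  ⟨!![1, 0; x, 1], !![1, 0; -x, 1],
    by ext i j; fin_cases i <;> fin_cases j <;> simp [Matrix.mul_apply, Fin.sum_univ_two],
    by ext i j; fin_cases i <;> fin_cases j <;> simp [Matrix.mul_apply, Fin.sum_univ_two]⟩

def diagl (v : Kˣ) : GL (Fin 2) K :=
  ⟨!![(v : K), 0; 0, 1], !![((v⁻¹ : Kˣ) : K), 0; 0, 1],
    by ext i j; fin_cases i <;> fin_cases j <;> simp [Matrix.mul_apply, Fin.sum_univ_two],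
    by ext i j; fin_cases i <;> fin_cases j <;> simp [Matrix.mul_apply, Fin.sum_univ_two]⟩

private lemma key1 (t m : Ideal (𝓞 K)) (htp : t.IsPrime) (ht : t ≠ 0)
    (U : Subgroup (𝓞 K)ˣ) (γ : GL (Fin 2) K)
    (ha : ∃ a : 𝓞 K, algebraMap (𝓞 K) K a = γ.1 0 0)
    (hb : γ.1 0 1 ∈ ((t : FractionalIdeal (𝓞 K)⁰ K))⁻¹)
    (hc : γ.1 1 0 ∈ ((t * m : Ideal (𝓞 K)) : FractionalIdeal (𝓞 K)⁰ K))
    (hd : ∃ D : 𝓞 K, algebraMap (𝓞 K) K D = γ.1 1 1 ∧ D ∉ t)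
    (hdet : γ.1 0 0 * γ.1 1 1 - γ.1 0 1 * γ.1 1 0 = 1) :
    γ ∈ Subgroup.closure (SOne t m ∪ STwo t ∪ SThree U) := by
  obtain ⟨A, hA⟩ := ha
  obtain ⟨D, hD, hDt⟩ := hd
  haveI : t.IsMaximal := htp.isMaximal ht
  obtain ⟨D', r, hr, hD'⟩ := (htp.isMaximal ht).exists_inv hDt
  set β : K := -(algebraMap (𝓞 K) K D' * γ.1 0 1) with hβdef
  have hβ : β ∈ ((t : FractionalIdeal (𝓞 K)⁰ K))⁻¹ := fneg (fsmul D' hb)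
  have hN2 : upl β ∈ STwo t := by
    refine ⟨by simp [upl], by simp [upl], by simp [upl], ?_⟩
    simpa [upl] using hβ
  have e00 : (upl β * γ).1 0 0 = γ.1 0 0 + β * γ.1 1 0 := by
    simp [upl, Units.val_mul, Matrix.mul_apply, Fin.sum_univ_two]
  have e01 : (upl β * γ).1 0 1 = γ.1 0 1 + β * γ.1 1 1 := by
    simp [upl, Units.val_mul, Matrix.mul_apply, Fin.sum_univ_two]
  have e10 : (upl β * γ).1 1 0 = γ.1 1 0 := by
    simp [upl, Units.val_mul, Matrix.mul_apply, Fin.sum_univ_two]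
  have e11 : (upl β * γ).1 1 1 = γ.1 1 1 := by
    simp [upl, Units.val_mul, Matrix.mul_apply, Fin.sum_univ_two]
  have hbc : γ.1 0 1 * γ.1 1 0 ∈ ((m : Ideal (𝓞 K)) : FractionalIdeal (𝓞 K)⁰ K) := by
    have h := FractionalIdeal.mul_mem_mul hb hc
    rwa [tinv_mul_tm t m ht] at h
  obtain ⟨E, hEm, hE⟩ := (FractionalIdeal.mem_coeIdeal _).mp hbc
  have h1t : (1 : 𝓞 K) - D' * D ∈ t := by
    have heq : (1 : 𝓞 K) - D' * D = r := by linear_combination -hD'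
    rwa [heq]
  have hval : γ.1 0 1 + β * γ.1 1 1 = γ.1 0 1 * algebraMap (𝓞 K) K (1 - D' * D) := by
    rw [hβdef, _root_.map_sub, _root_.map_one, _root_.map_mul, ← hD]; ring
  have hmem1 : γ.1 0 1 + β * γ.1 1 1 ∈ (1 : FractionalIdeal (𝓞 K)⁰ K) := by
    rw [hval]
    have h := FractionalIdeal.mul_mem_mul hb (fmem t h1t)
    rwa [tinv_mul t ht] at h
  obtain ⟨B, hB⟩ := (FractionalIdeal.mem_one_iff _).mp hmem1
  have hS1 : upl β * γ ∈ SOne t m := by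
    refine ⟨⟨A - D' * E, ?_⟩, ⟨B, ?_⟩, ?_, ⟨D, ?_⟩, ?_⟩
    · rw [_root_.map_sub, _root_.map_mul, hA, hE, e00, hβdef]; ring
    · rw [hB, e01]
    · rw [e10]; exact hc
    · rw [e11]; exact hD
    · rw [det_expr, show ((upl β * γ : GL (Fin 2) K) : Matrix (Fin 2) (Fin 2) K)
          = (upl β).1 * γ.1 from rfl, Matrix.det_mul]
      have hdN : ((upl β).1).det = 1 := by simp [upl, Matrix.det_fin_two]
      rw [hdN, one_mul, ← det_expr, hdet]
  have hγeq : γ = (upl β)⁻¹ * (upl β * γ) := by group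
  rw [hγeq]
  exact mul_mem (inv_mem (Subgroup.subset_closure
      (Set.mem_union_left _ (Set.mem_union_right _ hN2))))
    (Subgroup.subset_closure (Set.mem_union_left _ (Set.mem_union_left _ hS1)))

private lemma key0 (t m : Ideal (𝓞 K)) (htp : t.IsPrime) (ht : t ≠ 0)
    (U : Subgroup (𝓞 K)ˣ) (γ : GL (Fin 2) K)
    (ha : ∃ a : 𝓞 K, algebraMap (𝓞 K) K a = γ.1 0 0)
    (hb : γ.1 0 1 ∈ ((t : FractionalIdeal (𝓞 K)⁰ K))⁻¹)
    (hc : γ.1 1 0 ∈ ((t * m : Ideal (𝓞 K)) : FractionalIdeal (𝓞 K)⁰ K))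
    (hd : ∃ D : 𝓞 K, algebraMap (𝓞 K) K D = γ.1 1 1)
    (hdet : γ.1 0 0 * γ.1 1 1 - γ.1 0 1 * γ.1 1 0 = 1) :
    γ ∈ Subgroup.closure (SOne t m ∪ STwo t ∪ SThree U) := by
  obtain ⟨A, hA⟩ := ha
  obtain ⟨D, hD⟩ := hd
  by_cases hDt : D ∈ t
  · obtain ⟨C, hCtm, hC⟩ := (FractionalIdeal.mem_coeIdeal _).mp hc
    have hbc : γ.1 0 1 * γ.1 1 0 ∈ ((m : Ideal (𝓞 K)) : FractionalIdeal (𝓞 K)⁰ K) := by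
      have h := FractionalIdeal.mul_mem_mul hb hc
      rwa [tinv_mul_tm t m ht] at h
    obtain ⟨E, hEm, hE⟩ := (FractionalIdeal.mem_coeIdeal _).mp hbc
    have hEAD : E = A * D - 1 := by
      apply IsFractionRing.injective (𝓞 K) K
      rw [hE, _root_.map_sub, _root_.map_mul, hA, hD, _root_.map_one]
      linear_combination -hdet
    have hEt : E ∉ t := by
      intro hEt
      have h2 := t.sub_mem (Ideal.mul_mem_left t A hDt) hEt
      have heq : A * D - E = 1 := by rw [hEAD]; ring
      rw [heq] at h2
      exact htp.ne_top ((Ideal.eq_top_iff_one t).mpr h2)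
    obtain ⟨S', r2, hr2, hS'⟩ := (htp.isMaximal ht).exists_inv hEt
    have hSE : S' * E - 1 ∈ t := by
      have heq : S' * E - 1 = -r2 := by linear_combination hS'
      rw [heq]; exact t.neg_mem hr2
    set x : K := algebraMap (𝓞 K) K (S' * C) with hxdef
    have hL1 : lowl x ∈ SOne t m := by
      refine ⟨⟨1, by simp [lowl]⟩, ⟨0, by simp [lowl]⟩, ?_, ⟨1, by simp [lowl]⟩, by simp [lowl]⟩
      simpa [lowl, hxdef] using fmem (t * m) (Ideal.mul_mem_left _ S' hCtm)
    have e00 : (lowl x * γ).1 0 0 = γ.1 0 0 := by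
      simp [lowl, Units.val_mul, Matrix.mul_apply, Fin.sum_univ_two]
    have e01 : (lowl x * γ).1 0 1 = γ.1 0 1 := by
      simp [lowl, Units.val_mul, Matrix.mul_apply, Fin.sum_univ_two]
    have e10 : (lowl x * γ).1 1 0 = x * γ.1 0 0 + γ.1 1 0 := by
      simp [lowl, Units.val_mul, Matrix.mul_apply, Fin.sum_univ_two]
    have e11 : (lowl x * γ).1 1 1 = x * γ.1 0 1 + γ.1 1 1 := by
      simp [lowl, Units.val_mul, Matrix.mul_apply, Fin.sum_univ_two]
    have happ := key1 t m htp ht U (lowl x * γ)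
      ⟨A, by rw [e00]; exact hA⟩
      (by rw [e01]; exact hb)
      (by
        rw [e10]
        refine fadd ?_ hc
        rw [hxdef, ← hA, ← _root_.map_mul]
        exact fmem (t * m) (Ideal.mul_mem_right A _ (Ideal.mul_mem_left _ S' hCtm)))
      ⟨S' * E + D, by
        rw [e11, hxdef, _root_.map_add, _root_.map_mul, hE, hD, _root_.map_mul, hC]; ring, by
        intro h
        have h2 := t.sub_mem (t.sub_mem h hSE) hDt
        have heq : S' * E + D - (S' * E - 1) - D = 1 := by ring
        rw [heq] at h2
        exact htp.ne_top ((Ideal.eq_top_iff_one t).mpr h2)⟩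
      (by
        rw [det_expr, show ((lowl x * γ : GL (Fin 2) K) : Matrix (Fin 2) (Fin 2) K)
            = (lowl x).1 * γ.1 from rfl, Matrix.det_mul]
        have hdL : ((lowl x).1).det = 1 := by simp [lowl, Matrix.det_fin_two]
        rw [hdL, one_mul, ← det_expr, hdet])
    have hγeq : γ = (lowl x)⁻¹ * (lowl x * γ) := by group
    rw [hγeq]
    exact mul_mem (inv_mem (Subgroup.subset_closure
        (Set.mem_union_left _ (Set.mem_union_left _ hL1)))) happ
  · exact key1 t m htp ht U γ ⟨A, hA⟩ hb hc ⟨D, hD, hDt⟩ hdet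

theorem gamma_gen (t m : Ideal (𝓞 K)) (htp : t.IsPrime) (ht : t ≠ 0)
    (U : Subgroup (𝓞 K)ˣ) :
    GammaSet t m U = (Subgroup.closure (SOne t m ∪ STwo t ∪ SThree U) : Set (GL (Fin 2) K)) := by
  apply Set.Subset.antisymm
  · rintro γ ⟨⟨A, hA⟩, hb, hc, ⟨D, hD⟩, u, huU, hu⟩
    set v : Kˣ := Units.map (algebraMap (𝓞 K) K).toMonoidHom u with hvdef
    have hv : (v : K) = algebraMap (𝓞 K) K (u : (𝓞 K)ˣ) := rfl
    have hvinv : ((v⁻¹ : Kˣ) : K) = algebraMap (𝓞 K) K ((u⁻¹ : (𝓞 K)ˣ) : 𝓞 K) := by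
      have h : v⁻¹ = Units.map (algebraMap (𝓞 K) K).toMonoidHom u⁻¹ := (_root_.map_inv (Units.map (algebraMap (𝓞 K) K).toMonoidHom) u).symm
      rw [h]; rfl
    have h3 : diagl v ∈ SThree U := by
      refine ⟨by simp [diagl], by simp [diagl], by simp [diagl], u, huU, ?_⟩
      rw [show ((diagl v : GL (Fin 2) K) : Matrix (Fin 2) (Fin 2) K) 0 0 = (v : K) by
        simp [diagl]]
      exact hv.symm
    have e00 : (diagl v⁻¹ * γ).1 0 0 = ((v⁻¹ : Kˣ) : K) * γ.1 0 0 := by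
      simp [diagl, Units.val_mul, Matrix.mul_apply, Fin.sum_univ_two]
    have e01 : (diagl v⁻¹ * γ).1 0 1 = ((v⁻¹ : Kˣ) : K) * γ.1 0 1 := by
      simp [diagl, Units.val_mul, Matrix.mul_apply, Fin.sum_univ_two]
    have e10 : (diagl v⁻¹ * γ).1 1 0 = γ.1 1 0 := by
      simp [diagl, Units.val_mul, Matrix.mul_apply, Fin.sum_univ_two]
    have e11 : (diagl v⁻¹ * γ).1 1 1 = γ.1 1 1 := by
      simp [diagl, Units.val_mul, Matrix.mul_apply, Fin.sum_univ_two]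
    have happ := key0 t m htp ht U (diagl v⁻¹ * γ)
      ⟨(u⁻¹ : (𝓞 K)ˣ) * A, by rw [e00, hvinv, _root_.map_mul, hA]⟩
      (by rw [e01, hvinv]; exact fsmul _ hb)
      (by rw [e10]; exact hc)
      ⟨D, by rw [e11]; exact hD⟩
      (by
        rw [det_expr, show ((diagl v⁻¹ * γ : GL (Fin 2) K) : Matrix (Fin 2) (Fin 2) K)
            = (diagl v⁻¹).1 * γ.1 from rfl, Matrix.det_mul]
        have hdv : ((diagl v⁻¹).1).det = ((v⁻¹ : Kˣ) : K) := by
          simp [diagl, Matrix.det_fin_two]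
        rw [hdv, ← det_expr, ← hu, hvinv, ← _root_.map_mul, ← Units.val_mul,
          inv_mul_cancel, Units.val_one, _root_.map_one])
    have hdinv : (diagl v)⁻¹ = diagl v⁻¹ := Units.ext rfl
    have hγeq : γ = diagl v * (diagl v⁻¹ * γ) := by rw [← hdinv]; group
    rw [hγeq]
    exact mul_mem (Subgroup.subset_closure (Set.mem_union_right _ h3)) happ
  · have hle : Subgroup.closure (SOne t m ∪ STwo t ∪ SThree U) ≤ GammaGrp t m ht U := by
      rw [Subgroup.closure_le]
      rintro δ ((h1 | h2) | h3)
      · obtain ⟨⟨A, hA⟩, ⟨B, hB⟩, hc, ⟨D, hD⟩, hdet⟩ := h1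
        exact ⟨⟨A, hA⟩, by rw [← hB]; exact one_le_tinv t ht (fone B), hc, ⟨D, hD⟩,
          1, one_mem U, by rw [Units.val_one, _root_.map_one, hdet]⟩
      · obtain ⟨h00, h11, h10, hb⟩ := h2
        exact ⟨⟨1, by rw [_root_.map_one, h00]⟩, hb, by rw [h10]; exact fzero,
          ⟨1, by rw [_root_.map_one, h11]⟩,
          1, one_mem U, by rw [Units.val_one, _root_.map_one, h00, h11, h10]; ring⟩
      · obtain ⟨h01, h10, h11, u, huU, hu⟩ := h3
        exact ⟨⟨u, hu⟩, by rw [h01]; exact fzero, by rw [h10]; exact fzero,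
          ⟨1, by rw [_root_.map_one, h11]⟩,
          u, huU, by rw [h01, h10, h11, ← hu]; ring⟩
    exact fun γ hγ => hle hγ

end Gamma0Gen2

section Final

variable {K : Type*} [Field K] [NumberField K]

def totPos (K : Type*) [Field K] [NumberField K] : Subgroup (𝓞 K)ˣ where
  carrier := {u : (𝓞 K)ˣ | ∀ φ : K →+* ℝ, 0 < φ (algebraMap (𝓞 K) K (u : 𝓞 K))}
  one_mem' := fun φ => by simp
  mul_mem' := by
    intro a b ha hb φ
    rw [Units.val_mul, _root_.map_mul, _root_.map_mul]
    exact mul_pos (ha φ) (hb φ)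
  inv_mem' := by
    intro a ha φ
    have h : φ (algebraMap (𝓞 K) K ((a⁻¹ : (𝓞 K)ˣ) : 𝓞 K))
        * φ (algebraMap (𝓞 K) K ((a : (𝓞 K)ˣ) : 𝓞 K)) = 1 := by
      rw [← _root_.map_mul, ← _root_.map_mul, ← Units.val_mul, inv_mul_cancel, Units.val_one,
        _root_.map_one, _root_.map_one]
    rw [eq_inv_of_mul_eq_one_left h]
    exact inv_pos.mpr (ha φ)

end Final


/-- **Generation of `Γ₀(𝔱,𝔪)` for prime `𝔱`.**
For a number field `K`, a nonzero prime ideal `𝔱` and a nonzero ideal `𝔪` of `O_K`, the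
group `Γ₀(𝔱,𝔪)` (entries `a ∈ O_K`, `b ∈ 𝔱⁻¹`, `c ∈ 𝔱𝔪`, `d ∈ O_K`, determinant a unit of
`O_K`), viewed inside `GL₂(K)`, equals the subgroup generated by `SΓ₀(𝔱𝔪)` (integral
matrices of determinant 1 with lower-left entry in `𝔱𝔪`), the matrices `(1,b;0,1)` for
`b ∈ 𝔱⁻¹`, and `(ε,0;0,1)` for units `ε` of `O_K`; likewise `Γ₀⁺(𝔱,𝔪)` is generated using
only the totally positive units `ε`. -/
theorem stmt_8 (K : Type*) [Field K] [NumberField K]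
    (t : Ideal (𝓞 K)) (htp : t.IsPrime) (ht : t ≠ 0)
    (m : Ideal (𝓞 K)) (hm : m ≠ 0) :
    ({γ : GL (Fin 2) K |
        (∃ a : 𝓞 K, algebraMap (𝓞 K) K a = γ.1 0 0) ∧
        γ.1 0 1 ∈ ((t : FractionalIdeal (𝓞 K)⁰ K))⁻¹ ∧
        γ.1 1 0 ∈ ((t * m : Ideal (𝓞 K)) : FractionalIdeal (𝓞 K)⁰ K) ∧
        (∃ d : 𝓞 K, algebraMap (𝓞 K) K d = γ.1 1 1) ∧
        (∃ u : (𝓞 K)ˣ, algebraMap (𝓞 K) K u = γ.1 0 0 * γ.1 1 1 - γ.1 0 1 * γ.1 1 0)} =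
      (Subgroup.closure
        ({δ : GL (Fin 2) K |
            (∃ a : 𝓞 K, algebraMap (𝓞 K) K a = δ.1 0 0) ∧
            (∃ b : 𝓞 K, algebraMap (𝓞 K) K b = δ.1 0 1) ∧
            δ.1 1 0 ∈ ((t * m : Ideal (𝓞 K)) : FractionalIdeal (𝓞 K)⁰ K) ∧
            (∃ d : 𝓞 K, algebraMap (𝓞 K) K d = δ.1 1 1) ∧
            δ.1 0 0 * δ.1 1 1 - δ.1 0 1 * δ.1 1 0 = 1} ∪
         {δ : GL (Fin 2) K | δ.1 0 0 = 1 ∧ δ.1 1 1 = 1 ∧ δ.1 1 0 = 0 ∧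
            δ.1 0 1 ∈ ((t : FractionalIdeal (𝓞 K)⁰ K))⁻¹} ∪
         {δ : GL (Fin 2) K | δ.1 0 1 = 0 ∧ δ.1 1 0 = 0 ∧ δ.1 1 1 = 1 ∧
            ∃ u : (𝓞 K)ˣ, algebraMap (𝓞 K) K u = δ.1 0 0}) : Set _)) ∧
    ({γ : GL (Fin 2) K |
        (∃ a : 𝓞 K, algebraMap (𝓞 K) K a = γ.1 0 0) ∧
        γ.1 0 1 ∈ ((t : FractionalIdeal (𝓞 K)⁰ K))⁻¹ ∧
        γ.1 1 0 ∈ ((t * m : Ideal (𝓞 K)) : FractionalIdeal (𝓞 K)⁰ K) ∧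
        (∃ d : 𝓞 K, algebraMap (𝓞 K) K d = γ.1 1 1) ∧
        (∃ u : (𝓞 K)ˣ, algebraMap (𝓞 K) K u = γ.1 0 0 * γ.1 1 1 - γ.1 0 1 * γ.1 1 0 ∧
          ∀ φ : K →+* ℝ, 0 < φ (algebraMap (𝓞 K) K u))} =
      (Subgroup.closure
        ({δ : GL (Fin 2) K |
            (∃ a : 𝓞 K, algebraMap (𝓞 K) K a = δ.1 0 0) ∧
            (∃ b : 𝓞 K, algebraMap (𝓞 K) K b = δ.1 0 1) ∧
            δ.1 1 0 ∈ ((t * m : Ideal (𝓞 K)) : FractionalIdeal (𝓞 K)⁰ K) ∧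
            (∃ d : 𝓞 K, algebraMap (𝓞 K) K d = δ.1 1 1) ∧
            δ.1 0 0 * δ.1 1 1 - δ.1 0 1 * δ.1 1 0 = 1} ∪
         {δ : GL (Fin 2) K | δ.1 0 0 = 1 ∧ δ.1 1 1 = 1 ∧ δ.1 1 0 = 0 ∧
            δ.1 0 1 ∈ ((t : FractionalIdeal (𝓞 K)⁰ K))⁻¹} ∪
         {δ : GL (Fin 2) K | δ.1 0 1 = 0 ∧ δ.1 1 0 = 0 ∧ δ.1 1 1 = 1 ∧
            ∃ u : (𝓞 K)ˣ, algebraMap (𝓞 K) K u = δ.1 0 0 ∧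
              ∀ φ : K →+* ℝ, 0 < φ (algebraMap (𝓞 K) K u)}) : Set _)) := by
  constructor
  · have h1 : {γ : GL (Fin 2) K |
        (∃ a : 𝓞 K, algebraMap (𝓞 K) K a = γ.1 0 0) ∧
        γ.1 0 1 ∈ ((t : FractionalIdeal (𝓞 K)⁰ K))⁻¹ ∧
        γ.1 1 0 ∈ ((t * m : Ideal (𝓞 K)) : FractionalIdeal (𝓞 K)⁰ K) ∧
        (∃ d : 𝓞 K, algebraMap (𝓞 K) K d = γ.1 1 1) ∧
        (∃ u : (𝓞 K)ˣ, algebraMap (𝓞 K) K u = γ.1 0 0 * γ.1 1 1 - γ.1 0 1 * γ.1 1 0)} =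
        GammaSet t m (⊤ : Subgroup (𝓞 K)ˣ) := by
      ext γ
      constructor
      · rintro ⟨ha, hb, hc, hd, u, hu⟩
        exact ⟨ha, hb, hc, hd, u, Subgroup.mem_top u, hu⟩
      · rintro ⟨ha, hb, hc, hd, u, _, hu⟩
        exact ⟨ha, hb, hc, hd, u, hu⟩
    have h3 : {δ : GL (Fin 2) K | δ.1 0 1 = 0 ∧ δ.1 1 0 = 0 ∧ δ.1 1 1 = 1 ∧
        ∃ u : (𝓞 K)ˣ, algebraMap (𝓞 K) K u = δ.1 0 0} =
        SThree (⊤ : Subgroup (𝓞 K)ˣ) := by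
      ext δ
      constructor
      · rintro ⟨h01, h10, h11, u, hu⟩
        exact ⟨h01, h10, h11, u, Subgroup.mem_top u, hu⟩
      · rintro ⟨h01, h10, h11, u, _, hu⟩
        exact ⟨h01, h10, h11, u, hu⟩
    rw [h1, h3]
    exact gamma_gen t m htp ht ⊤
  · have h1 : {γ : GL (Fin 2) K |
        (∃ a : 𝓞 K, algebraMap (𝓞 K) K a = γ.1 0 0) ∧
        γ.1 0 1 ∈ ((t : FractionalIdeal (𝓞 K)⁰ K))⁻¹ ∧
        γ.1 1 0 ∈ ((t * m : Ideal (𝓞 K)) : FractionalIdeal (𝓞 K)⁰ K) ∧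
        (∃ d : 𝓞 K, algebraMap (𝓞 K) K d = γ.1 1 1) ∧
        (∃ u : (𝓞 K)ˣ, algebraMap (𝓞 K) K u = γ.1 0 0 * γ.1 1 1 - γ.1 0 1 * γ.1 1 0 ∧
          ∀ φ : K →+* ℝ, 0 < φ (algebraMap (𝓞 K) K u))} =
        GammaSet t m (totPos K) := by
      ext γ
      constructor
      · rintro ⟨ha, hb, hc, hd, u, hu, hpos⟩
        exact ⟨ha, hb, hc, hd, u, hpos, hu⟩
      · rintro ⟨ha, hb, hc, hd, u, hpos, hu⟩
        exact ⟨ha, hb, hc, hd, u, hu, hpos⟩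
    have h3 : {δ : GL (Fin 2) K | δ.1 0 1 = 0 ∧ δ.1 1 0 = 0 ∧ δ.1 1 1 = 1 ∧
        ∃ u : (𝓞 K)ˣ, algebraMap (𝓞 K) K u = δ.1 0 0 ∧
          ∀ φ : K →+* ℝ, 0 < φ (algebraMap (𝓞 K) K u)} =
        SThree (totPos K) := by
      ext δ
      constructor
      · rintro ⟨h01, h10, h11, u, hu, hpos⟩
        exact ⟨h01, h10, h11, u, hpos, hu⟩
      · rintro ⟨h01, h10, h11, u, hpos, hu⟩
        exact ⟨h01, h10, h11, u, hu, hpos⟩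
    rw [h1, h3]
    exact gamma_gen t m htp ht (totPos K)
end

section
/- Let K be a number field with different ideal 𝔡, and let p∈O_K be a totally positive element such that (p) is a prime ideal of degree 1 and p does not divide N(𝔡) in O_K. Then for every ξ∈𝔡⁻¹, the trace tr_{K/ℚ}(ξ·N(p)/p) is a rational integer, and (p) divides the ideal ξ𝔡 if and only if N(p) divides tr_{K/ℚ}(ξ·N(p)/p). -/
open NumberField FractionalIdeal
open scoped nonZeroDivisors

lemma stmt_18_mem_inv_diff (K : Type*) [Field K] [NumberField K] (x : K) :
    x ∈ ((differentIdeal ℤ (𝓞 K) : FractionalIdeal (𝓞 K)⁰ K))⁻¹ ↔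
      ∀ b : 𝓞 K, ∃ n : ℤ,
        Algebra.trace ℚ K (x * algebraMap (𝓞 K) K b) = (n : ℚ) := by
  rw [coeIdeal_differentIdeal ℤ ℚ K (𝓞 K), inv_inv,
    FractionalIdeal.mem_dual (one_ne_zero : (1 : FractionalIdeal (𝓞 K)⁰ K) ≠ 0)]
  simp only [Algebra.traceForm_apply, RingHom.mem_range]
  constructor
  · intro h b
    obtain ⟨n, hn⟩ := h (algebraMap (𝓞 K) K b)
      ((FractionalIdeal.mem_one_iff _).mpr ⟨b, rfl⟩)
    exact ⟨n, by rw [← hn, eq_intCast]⟩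
  · intro h a ha
    obtain ⟨b, rfl⟩ := (FractionalIdeal.mem_one_iff _).mp ha
    obtain ⟨n, hn⟩ := h b
    exact ⟨n, by rw [hn, eq_intCast]⟩

set_option synthInstance.maxHeartbeats 400000 in
set_option maxHeartbeats 1000000 in
/-- **Detecting divisibility by a degree-one prime via traces.**
Let `𝔡` be the different ideal of `K` and `p` a totally positive element generating a prime
ideal of degree 1 with `p ∤ N(𝔡)`. Then for every `ξ ∈ 𝔡⁻¹`, the trace
`tr_{K/ℚ}(ξ·N(p)/p)` is a rational integer `n`, and `ξ/p ∈ 𝔡⁻¹` (i.e. `(p) ∣ ξ𝔡`) if and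
only if `N(p) ∣ n`. -/
theorem stmt_18 (K : Type*) [Field K] [NumberField K]
    (p : 𝓞 K)
    (hpos : ∀ φ : K →+* ℝ, 0 < φ (algebraMap (𝓞 K) K p))
    (hprime : (Ideal.span {p}).IsPrime) (hp0 : Ideal.span {p} ≠ (⊥ : Ideal (𝓞 K)))
    (hdeg1 : Ideal.ramificationIdx'
        ((Ideal.span {p}).comap (algebraMap ℤ (𝓞 K))) (Ideal.span {p}) *
      Ideal.inertiaDeg'
        ((Ideal.span {p}).comap (algebraMap ℤ (𝓞 K))) (Ideal.span {p}) = 1)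
    (hnd : ¬ (p ∣ (Ideal.absNorm (differentIdeal ℤ (𝓞 K)) : 𝓞 K))) :
    ∀ ξ : K, ξ ∈ ((differentIdeal ℤ (𝓞 K) : FractionalIdeal (𝓞 K)⁰ K))⁻¹ →
      ∃ n : ℤ,
        Algebra.trace ℚ K (ξ * (Ideal.absNorm (Ideal.span {p}) : K) / algebraMap (𝓞 K) K p)
          = (n : ℚ) ∧
        ((ξ / algebraMap (𝓞 K) K p ∈
            ((differentIdeal ℤ (𝓞 K) : FractionalIdeal (𝓞 K)⁰ K))⁻¹) ↔
          (Ideal.absNorm (Ideal.span {p}) : ℤ) ∣ n) := by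
  have hp : p ≠ 0 := fun h => hp0 (by simp [h])
  have hpK : algebraMap (𝓞 K) K p ≠ 0 := by
    simpa using hp
  have hq0 : Ideal.absNorm (Ideal.span {p}) ≠ 0 := by
    rw [Ne, Ideal.absNorm_eq_zero_iff]; exact hp0
  have hqQ : ((Ideal.absNorm (Ideal.span {p}) : ℚ)) ≠ 0 := Nat.cast_ne_zero.mpr hq0
  obtain ⟨m, hm⟩ : p ∣ ((Ideal.absNorm (Ideal.span {p}) : 𝓞 K)) :=
    Ideal.mem_span_singleton.mp (Ideal.absNorm_mem _)
  have hmK : algebraMap (𝓞 K) K p * algebraMap (𝓞 K) K m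
      = (Ideal.absNorm (Ideal.span {p}) : K) := by
    rw [← _root_.map_mul, ← hm, map_natCast]
  -- surjectivity of ℤ onto the residue field
  have hsurj : ∀ b : 𝓞 K, ∃ a : ℤ, ∃ β : 𝓞 K, b = (a : 𝓞 K) + p * β := by
    haveI := hprime
    haveI : Nontrivial (𝓞 K ⧸ Ideal.span {p}) :=
      Ideal.Quotient.nontrivial_iff.mpr (hprime.isMaximal hp0).ne_top
    haveI hPmax : (Ideal.span {p}).IsMaximal := hprime.isMaximal hp0
    set c := (Ideal.span {p}).comap (algebraMap ℤ (𝓞 K)) with hc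
    have hc0 : c ≠ ⊥ := by
      intro h
      have hmem : ((Ideal.absNorm (Ideal.span {p}) : ℤ)) ∈ c := by
        rw [hc, Ideal.mem_comap, map_natCast]
        exact Ideal.absNorm_mem (Ideal.span {p})
      rw [h, Ideal.mem_bot] at hmem
      exact hq0 (by exact_mod_cast hmem)
    haveI hcmax : c.IsMaximal := Ideal.IsPrime.isMaximal inferInstance hc0
    letI : Field (ℤ ⧸ c) := Ideal.Quotient.field c
    letI : Algebra (ℤ ⧸ c) ((𝓞 K) ⧸ Ideal.span {p}) :=
      Ideal.Quotient.algebraQuotientOfLEComap (le_of_eq hc)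
    have hf : Ideal.inertiaDeg' c (Ideal.span {p}) = 1 :=
      Nat.eq_one_of_mul_eq_one_left hdeg1
    have hfin : Module.finrank (ℤ ⧸ c) (𝓞 K ⧸ Ideal.span {p}) = 1 := by
      rw [Ideal.inertiaDeg', dif_pos rfl] at hf
      exact hf
    have hbt := Subalgebra.bot_eq_top_of_finrank_eq_one hfin
    intro b
    have hmemtop : Ideal.Quotient.mk (Ideal.span {p}) b ∈
        (⊥ : Subalgebra (ℤ ⧸ c) (𝓞 K ⧸ Ideal.span {p})) := by
      rw [hbt]; trivial
    obtain ⟨y, hy⟩ := Algebra.mem_bot.mp hmemtop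
    obtain ⟨a, rfl⟩ := Ideal.Quotient.mk_surjective y
    refine ⟨a, ?_⟩
    have key : Ideal.Quotient.mk (Ideal.span {p}) (algebraMap ℤ (𝓞 K) a)
        = Ideal.Quotient.mk (Ideal.span {p}) b := by
      rw [← hy]
      exact (Ideal.quotientMap_mk (H := le_of_eq hc)).symm
    have hdiff : b - (a : 𝓞 K) ∈ Ideal.span {p} := by
      have := (Ideal.Quotient.mk_eq_mk_iff_sub_mem _ _).mp key.symm
      simpa using this
    obtain ⟨β, hβ⟩ := Ideal.mem_span_singleton.mp hdiff
    exact ⟨β, by rw [← hβ]; ring⟩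
  intro ξ hξ
  rw [stmt_18_mem_inv_diff] at hξ
  obtain ⟨n, hn⟩ := hξ m
  have key : ξ * (Ideal.absNorm (Ideal.span {p}) : K) / algebraMap (𝓞 K) K p
      = ξ * algebraMap (𝓞 K) K m := by
    rw [div_eq_iff hpK, ← hmK]; ring
  refine ⟨n, by rw [key]; exact hn, ?_, ?_⟩
  · intro h
    rw [stmt_18_mem_inv_diff] at h
    obtain ⟨k, hk⟩ := h 1
    refine ⟨k, ?_⟩
    have e1 : ξ * algebraMap (𝓞 K) K m
        = ((Ideal.absNorm (Ideal.span {p}) : ℚ)) •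
          (ξ / algebraMap (𝓞 K) K p * algebraMap (𝓞 K) K 1) := by
      rw [Algebra.smul_def, _root_.map_one, mul_one, map_natCast (algebraMap ℚ K), ← hmK]
      field_simp
    have e2 : (n : ℚ) = (Ideal.absNorm (Ideal.span {p}) : ℚ) * k := by
      rw [← hn, e1, map_smul, hk, smul_eq_mul]
    exact_mod_cast e2
  · rintro ⟨j, hj⟩
    rw [stmt_18_mem_inv_diff]
    intro b
    obtain ⟨a, β, hb⟩ := hsurj b
    obtain ⟨k, hk⟩ := hξ β
    refine ⟨a * j + k, ?_⟩
    have e1 : ξ / algebraMap (𝓞 K) K p * algebraMap (𝓞 K) K b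
        = ((a : ℚ) / (Ideal.absNorm (Ideal.span {p}) : ℚ)) • (ξ * algebraMap (𝓞 K) K m)
          + ξ * algebraMap (𝓞 K) K β := by
      have hmne : algebraMap (𝓞 K) K m ≠ 0 := by
        have hm0 : m ≠ 0 := by
          intro h0
          rw [h0, mul_zero] at hm
          exact hq0 (by exact_mod_cast hm)
        simpa using hm0
      rw [hb, Algebra.smul_def, map_div₀, map_intCast, map_natCast (algebraMap ℚ K),
        _root_.map_add, _root_.map_mul, map_intCast, ← hmK]
      field_simp
    rw [e1, _root_.map_add, map_smul, hn, hk, smul_eq_mul]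
    have hnQ : (n : ℚ) = (Ideal.absNorm (Ideal.span {p}) : ℚ) * (j : ℚ) := by
      exact_mod_cast hj
    rw [hnQ]
    have h2 : ((a : ℚ)) / (Ideal.absNorm (Ideal.span {p}) : ℚ)
        * ((Ideal.absNorm (Ideal.span {p}) : ℚ) * (j : ℚ)) = (a : ℚ) * (j : ℚ) := by
      rw [div_mul_eq_mul_div, mul_div_assoc,
        mul_comm ((Ideal.absNorm (Ideal.span {p}) : ℚ)) (j : ℚ), mul_div_assoc,
        div_self hqQ, mul_one]
    rw [h2]
    push_cast
    ring
end
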